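/- arXiv:1801.02572 — 2 statements merged into one kernel-verified Lean document; each statement's English description precedes it below -/
import Mathlib

section
/- Let γ be irrational with continued fraction expansion [c_0; c_1, c_2, …] and convergents p_n/q_n. Then for every n ≥ 1, q_n|q_n γ - p_n| < 1/(c_{n+1} + 1/(c_{n+2}+1) + 1/(c_n+1)). -/
/-- Numerator of the `n`-th convergent of the continued fraction with
partial quotients `c`. -/
def convP (c : ℕ → ℤ) : ℕ → ℤ
  | 0 => c 0
  | 1 => c 1 * c 0 + 1
  | (n + 2) => c (n + 2) * convP c (n + 1) + convP c n

/-- Denominator of the `n`-th convergent of the continued fraction with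
partial quotients `c`. -/
def convQ (c : ℕ → ℤ) : ℕ → ℤ
  | 0 => 1
  | 1 => c 1
  | (n + 2) => c (n + 2) * convQ c (n + 1) + convQ c n

/-- `γ` has (infinite) continued fraction expansion `[c 0; c 1, c 2, ...]`:
all partial quotients with positive index are positive integers, and the
convergents tend to `γ`. -/
def IsCF (γ : ℝ) (c : ℕ → ℤ) : Prop :=
  (∀ n, 1 ≤ n → 1 ≤ c n) ∧
  Filter.Tendsto (fun n => (convP c n : ℝ) / (convQ c n : ℝ)) Filter.atTop (nhds γ)

lemma convQ_pos (c : ℕ → ℤ) (hc : ∀ n, 1 ≤ n → 1 ≤ c n) : ∀ n, 1 ≤ convQ c n := by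
  have h : ∀ n, 1 ≤ convQ c n ∧ 1 ≤ convQ c (n+1) := by
    intro n
    induction n with
    | zero => exact ⟨le_refl 1, hc 1 le_rfl⟩
    | succ k ih =>
      refine ⟨ih.2, ?_⟩
      have h1 : 1 ≤ c (k+2) := hc _ (by omega)
      have h2 : convQ c (k+2) = c (k+2) * convQ c (k+1) + convQ c k := rfl
      nlinarith [ih.1, ih.2]
  exact fun n => (h n).1

lemma convQ_mono (c : ℕ → ℤ) (hc : ∀ n, 1 ≤ n → 1 ≤ c n) :
    ∀ n, convQ c n ≤ convQ c (n+1) := by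
  intro n
  match n with
  | 0 => exact hc 1 le_rfl
  | (k+1) =>
    have h1 : 1 ≤ c (k+2) := hc _ (by omega)
    have h2 : convQ c (k+2) = c (k+2) * convQ c (k+1) + convQ c k := rfl
    nlinarith [convQ_pos c hc k, convQ_pos c hc (k+1)]

lemma convQ_le (c : ℕ → ℤ) (hc : ∀ n, 1 ≤ n → 1 ≤ c n) (n : ℕ) (hn : 1 ≤ n) :
    convQ c n ≤ (c n + 1) * convQ c (n-1) := by
  match n, hn with
  | 1, _ =>
    have h1 : convQ c 1 = c 1 := rfl
    have h0 : convQ c 0 = 1 := rfl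
    have := hc 1 le_rfl
    show convQ c 1 ≤ (c 1 + 1) * convQ c 0
    rw [h1, h0]; nlinarith
  | (k+2), _ =>
    have h2 : convQ c (k+2) = c (k+2) * convQ c (k+1) + convQ c k := rfl
    have h3 : convQ c k ≤ convQ c (k+1) := convQ_mono c hc k
    show convQ c (k+2) ≤ (c (k+2) + 1) * convQ c (k+1)
    nlinarith [convQ_pos c hc (k+1)]

lemma convDet (c : ℕ → ℤ) :
    ∀ n, convP c (n+1) * convQ c n - convP c n * convQ c (n+1) = (-1)^n := by
  intro n
  induction n with
  | zero => simp [convP, convQ]; ring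
  | succ k ih =>
    have hP : convP c (k+2) = c (k+2) * convP c (k+1) + convP c k := rfl
    have hQ : convQ c (k+2) = c (k+2) * convQ c (k+1) + convQ c k := rfl
    rw [hP, hQ, pow_succ]
    linear_combination (-1 : ℤ) * ih

noncomputable def convR (c : ℕ → ℤ) (n : ℕ) : ℝ := (convP c n : ℝ) / (convQ c n : ℝ)

lemma convQ_posR (c : ℕ → ℤ) (hc : ∀ n, 1 ≤ n → 1 ≤ c n) (m : ℕ) :
    (0:ℝ) < (convQ c m : ℝ) := by
  have : (1:ℝ) ≤ (convQ c m : ℝ) := by exact_mod_cast convQ_pos c hc m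
  linarith

lemma conv_step (c : ℕ → ℤ) (hc : ∀ n, 1 ≤ n → 1 ≤ c n) (m : ℕ) :
    0 < (-1:ℝ)^m * (convR c (m+2) - convR c m) := by
  have hP : convP c (m+2) = c (m+2) * convP c (m+1) + convP c m := rfl
  have hQ : convQ c (m+2) = c (m+2) * convQ c (m+1) + convQ c m := rfl
  have hnum : convP c (m+2) * convQ c m - convP c m * convQ c (m+2) = c (m+2) * (-1)^m := by
    rw [hP, hQ]
    linear_combination c (m+2) * convDet c m
  have hnumR : (convP c (m+2) : ℝ) * (convQ c m : ℝ) - (convP c m : ℝ) * (convQ c (m+2) : ℝ)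
      = (c (m+2) : ℝ) * (-1)^m := by exact_mod_cast hnum
  have h0 := (convQ_posR c hc m).ne'
  have h2 := (convQ_posR c hc (m+2)).ne'
  have hsq : ((-1:ℝ)^m)^2 = 1 := by
    rw [← pow_mul, pow_mul', neg_one_sq, one_pow]
  have key : (-1:ℝ)^m * (convR c (m+2) - convR c m)
      = (c (m+2) : ℝ) / ((convQ c m : ℝ) * (convQ c (m+2) : ℝ)) := by
    unfold convR
    rw [div_sub_div _ _ h2 h0, ← mul_div_assoc,
      div_eq_div_iff (mul_ne_zero h2 h0) (mul_ne_zero h0 h2)]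
    linear_combination ((convQ c m : ℝ) * (convQ c (m+2) : ℝ)) * ((-1:ℝ)^m) * hnumR
      + ((c (m+2) : ℝ) * ((convQ c m : ℝ) * (convQ c (m+2) : ℝ))) * hsq
  rw [key]
  have h1 : (1:ℝ) ≤ (c (m+2) : ℝ) := by exact_mod_cast hc _ (by omega)
  have := convQ_posR c hc m
  have := convQ_posR c hc (m+2)
  have hpos : (0:ℝ) < (convQ c m : ℝ) * (convQ c (m+2) : ℝ) := by positivity
  exact div_pos (by linarith) hpos

/-- the `n`-th "error" `(-1)^n (q_n γ - p_n)` -/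
noncomputable def convY (γ : ℝ) (c : ℕ → ℤ) (m : ℕ) : ℝ :=
  (-1:ℝ)^m * ((convQ c m : ℝ) * γ - (convP c m : ℝ))

lemma convY_pos (γ : ℝ) (c : ℕ → ℤ) (hcf : IsCF γ c) (n : ℕ) : 0 < convY γ c n := by
  have hc := hcf.1
  have mono : ∀ k, (-1:ℝ)^n * convR c (n+2) ≤ (-1:ℝ)^n * convR c (n+2*(k+1)) := by
    intro k
    induction k with
    | zero => norm_num
    | succ k ih =>
      have hs := conv_step c hc (n+2*(k+1))
      have hpow : (-1:ℝ)^(n+2*(k+1)) = (-1)^n := by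
        rw [pow_add, pow_mul]; norm_num
      have hidx : n+2*(k+1)+2 = n+2*(k+1+1) := by ring
      rw [hpow, hidx, mul_sub] at hs
      linarith
  have htend : Filter.Tendsto (fun k => n + 2*(k+1)) Filter.atTop Filter.atTop := by
    apply Filter.tendsto_atTop_atTop.mpr
    intro b; exact ⟨b, fun k hk => by omega⟩
  have hcf2 : Filter.Tendsto (convR c) Filter.atTop (nhds γ) := hcf.2
  have h2 := (hcf2.comp htend).const_mul ((-1:ℝ)^n)
  have h3 : (-1:ℝ)^n * convR c (n+2) ≤ (-1:ℝ)^n * γ := ge_of_tendsto' h2 mono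
  have hstep := conv_step c hc n
  have h4 : 0 < (-1:ℝ)^n * (γ - convR c n) := by
    rw [mul_sub] at hstep ⊢
    linarith
  have hq := convQ_posR c hc n
  have hp : (convQ c n : ℝ) * convR c n = (convP c n : ℝ) := by
    unfold convR; field_simp
  have h5 : convY γ c n = (convQ c n : ℝ) * ((-1:ℝ)^n * (γ - convR c n)) := by
    unfold convY; rw [← hp]; ring
  rw [h5]
  exact mul_pos hq h4

lemma convY_sum (γ : ℝ) (c : ℕ → ℤ) (m : ℕ) :
    (convQ c (m+1) : ℝ) * convY γ c m + (convQ c m : ℝ) * convY γ c (m+1) = 1 := by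
  have hdetR : (convP c (m+1) : ℝ) * (convQ c m : ℝ) - (convP c m : ℝ) * (convQ c (m+1) : ℝ)
      = (-1)^m := by exact_mod_cast convDet c m
  have hsq : ((-1:ℝ)^m)^2 = 1 := by
    rw [← pow_mul, pow_mul', neg_one_sq, one_pow]
  unfold convY
  linear_combination ((-1:ℝ)^m) * hdetR + hsq

lemma convY_rec (γ : ℝ) (c : ℕ → ℤ) (m : ℕ) :
    convY γ c m = (c (m+2) : ℝ) * convY γ c (m+1) + convY γ c (m+2) := by
  have hP : convP c (m+2) = c (m+2) * convP c (m+1) + convP c m := rfl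
  have hQ : convQ c (m+2) = c (m+2) * convQ c (m+1) + convQ c m := rfl
  have hPR : (convP c (m+2) : ℝ) = (c (m+2) : ℝ) * (convP c (m+1) : ℝ) + (convP c m : ℝ) := by
    exact_mod_cast congrArg (fun x : ℤ => (x : ℝ)) hP
  have hQR : (convQ c (m+2) : ℝ) = (c (m+2) : ℝ) * (convQ c (m+1) : ℝ) + (convQ c m : ℝ) := by
    exact_mod_cast congrArg (fun x : ℤ => (x : ℝ)) hQ
  unfold convY
  rw [hPR, hQR]
  ring

theorem stmt_11 (γ : ℝ) (hγ : Irrational γ) (c : ℕ → ℤ) (hcf : IsCF γ c)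
    (n : ℕ) (hn : 1 ≤ n) :
    (convQ c n : ℝ) * |(convQ c n : ℝ) * γ - (convP c n : ℝ)| <
      1 / ((c (n + 1) : ℝ) + 1 / ((c (n + 2) : ℝ) + 1) + 1 / ((c n : ℝ) + 1)) := by
  obtain ⟨m, rfl⟩ : ∃ m, n = m + 1 := ⟨n - 1, by omega⟩
  set n := m + 1 with hn'
  have hc := hcf.1
  have ha : 0 < convY γ c n := convY_pos γ c hcf n
  have hb : 0 < convY γ c (n+1) := convY_pos γ c hcf (n+1)
  have hy2 : 0 < convY γ c (n+2) := convY_pos γ c hcf (n+2)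
  have hy3 : 0 < convY γ c (n+3) := convY_pos γ c hcf (n+3)
  -- |q_n γ - p_n| = convY γ c n
  have habs : |(convQ c n : ℝ) * γ - (convP c n : ℝ)| = convY γ c n := by
    have : |(convQ c n : ℝ) * γ - (convP c n : ℝ)|
        = |(-1:ℝ)^n * ((convQ c n : ℝ) * γ - (convP c n : ℝ))| := by
      rw [abs_mul, abs_pow, abs_neg, abs_one, one_pow, one_mul]
    rw [this]
    exact abs_of_pos ha
  rw [habs]
  set a := convY γ c n
  set b := convY γ c (n+1)
  -- a < (c (n+2) + 1) * b
  have hrec1 := convY_rec γ c n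
  have hrec2 := convY_rec γ c (n+1)
  have hc3R : (1:ℝ) ≤ (c (n+3) : ℝ) := by exact_mod_cast hc (n+3) (by omega)
  have hc2R : (1:ℝ) ≤ (c (n+2) : ℝ) := by exact_mod_cast hc (n+2) (by omega)
  have hc1R : (1:ℝ) ≤ (c (n+1) : ℝ) := by exact_mod_cast hc (n+1) (by omega)
  have hc0R : (1:ℝ) ≤ (c n : ℝ) := by exact_mod_cast hc n (by omega)
  have hy2b : convY γ c (n+2) < b := by nlinarith
  have hab : a < ((c (n+2) : ℝ) + 1) * b := by nlinarith
  -- q recurrence and bound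
  have hQrec : (convQ c (n+1) : ℝ) = (c (n+1) : ℝ) * (convQ c n : ℝ) + (convQ c m : ℝ) := by
    have h : convQ c (m+2) = c (m+2) * convQ c (m+1) + convQ c m := rfl
    exact_mod_cast congrArg (fun x : ℤ => (x : ℝ)) h
  have hQle : (convQ c n : ℝ) ≤ ((c n : ℝ) + 1) * (convQ c m : ℝ) := by
    have h := convQ_le c hc n (by omega)
    have h' : convQ c n ≤ (c n + 1) * convQ c m := h
    exact_mod_cast h'
  have hQ1 := convQ_posR c hc m
  have hQ2 := convQ_posR c hc n
  have hQ3 := convQ_posR c hc (n+1)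
  have hsum := convY_sum γ c n
  -- denominators
  have hv : (0:ℝ) < (c (n+2) : ℝ) + 1 := by linarith
  have hw : (0:ℝ) < (c n : ℝ) + 1 := by linarith
  have hA : (0:ℝ) < (c (n+1) : ℝ) + 1 / ((c (n+2) : ℝ) + 1) + 1 / ((c n : ℝ) + 1) := by
    have : (0:ℝ) < 1 / ((c (n+2) : ℝ) + 1) := by positivity
    have : (0:ℝ) < 1 / ((c n : ℝ) + 1) := by positivity
    linarith
  rw [lt_div_iff₀ hA]
  have h1 : (convQ c n : ℝ) * a / ((c n : ℝ) + 1) ≤ (convQ c m : ℝ) * a := by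
    rw [div_le_iff₀ hw]
    nlinarith [mul_le_mul_of_nonneg_right hQle ha.le]
  have h2 : (convQ c n : ℝ) * a / ((c (n+2) : ℝ) + 1) < (convQ c n : ℝ) * b := by
    rw [div_lt_iff₀ hv]
    nlinarith [mul_lt_mul_of_pos_left hab hQ2]
  have hone : (c (n+1) : ℝ) * ((convQ c n : ℝ) * a) + (convQ c m : ℝ) * a
      + (convQ c n : ℝ) * b = 1 := by
    rw [← hsum, hQrec]; ring
  calc (convQ c n : ℝ) * a * ((c (n+1) : ℝ) + 1 / ((c (n+2) : ℝ) + 1) + 1 / ((c n : ℝ) + 1))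
      = (c (n+1) : ℝ) * ((convQ c n : ℝ) * a)
        + (convQ c n : ℝ) * a / ((c (n+2) : ℝ) + 1)
        + (convQ c n : ℝ) * a / ((c n : ℝ) + 1) := by ring
    _ < 1 := by linarith
end

section
/- Let γ = [0; 1, 1, c_3, 1, c_5, 1, c_7, …] be irrational with c_{2n} = 1 for all n, c_1 = 1, and c_{2n+1} ∈ {1,2} for n ≥ 1. If c_{2n+1} = 2 with n ≥ 1, then q_{2n}(q_{2n}γ - p_{2n}) < 1/3, and moreover (2/π)·q_{2n}·tan((π/2)(q_{2n}γ - p_{2n})) < (4/π)(2 - √3). -/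
/-! Put `q = q_{2n}` and `δ = q γ - p_{2n}`, which is positive because even convergents lie below
`γ`. Odd convergents lie above `γ`, so `δ < D / q_{2n+3}` with the determinant
`D = p_{2n+3} q - p_{2n} q_{2n+3} = c_{2n+3} c_{2n+2} + 1 = c_{2n+3} + 1`. Unwinding the recursion
with `c_{2n+1} = 2`, `c_{2n+2} = 1`, and `q ≤ 2 q_{2n-1}` (from `c_{2n} = 1`) gives
`q_{2n+3} ≥ 3 q (c_{2n+3} + 1)`, whence `q δ < 1/3`. Since `q ≥ 2`, `(π/2) δ ≤ π/12`, and on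
`[0, π/12]` the convex function `tan` lies below its chord `x ↦ (12/π)(2 - √3) x`,
as `tan (π/12) = 2 - √3`. -/

open Filter Topology

theorem StrictMono.lt_of_tendsto {α : Type*} [TopologicalSpace α] [Preorder α]
    [OrderClosedTopology α] {f : ℕ → α} {a : α} (hf : StrictMono f)
    (ha : Tendsto f atTop (𝓝 a)) (n : ℕ) : f n < a :=
  (hf n.lt_succ_self).trans_le (hf.monotone.ge_of_tendsto ha _)

theorem StrictAnti.lt_of_tendsto {α : Type*} [TopologicalSpace α] [Preorder α]
    [OrderClosedTopology α] {f : ℕ → α} {a : α} (hf : StrictAnti f)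
    (ha : Tendsto f atTop (𝓝 a)) (n : ℕ) : a < f n :=
  StrictMono.lt_of_tendsto (α := αᵒᵈ) hf ha n

def crossDet (c : ℕ → ℤ) (N j : ℕ) : ℤ := convP c j * convQ c N - convP c N * convQ c j

section ContinuedFraction

variable {c : ℕ → ℤ}

theorem crossDet_self (N : ℕ) : crossDet c N N = 0 := by
  rw [crossDet, mul_comm, sub_self]

theorem crossDet_swap (N j : ℕ) : crossDet c j N = -crossDet c N j := by
  rw [crossDet, crossDet]
  ring

theorem crossDet_add_two (N j : ℕ) :
    crossDet c N (j + 2) = c (j + 2) * crossDet c N (j + 1) + crossDet c N j := by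
  simp only [crossDet, convP, convQ]
  ring

theorem crossDet_succ_self (k : ℕ) : crossDet c k (k + 1) = (-1) ^ k := by
  induction k with
  | zero =>
    simp only [crossDet, convP, convQ]
    ring
  | succ k ih =>
    have : crossDet c (k + 1) (k + 2) = -crossDet c k (k + 1) := by
      simp only [crossDet, convP, convQ]
      ring
    rw [this, ih, pow_succ]
    ring

theorem crossDet_add_two_self (k : ℕ) : crossDet c k (k + 2) = (-1) ^ k * c (k + 2) := by
  rw [crossDet_add_two, crossDet_succ_self, crossDet_self]
  ring

theorem crossDet_add_three_self (k : ℕ) :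
    crossDet c k (k + 3) = (-1) ^ k * (c (k + 3) * c (k + 2) + 1) := by
  rw [crossDet_add_two, crossDet_add_two_self, crossDet_succ_self]
  ring

variable (hc : ∀ n, 1 ≤ n → 1 ≤ c n)
include hc

theorem convQ_pos_s16 (n : ℕ) : 0 < convQ c n := by
  induction n using Nat.strong_induction_on with
  | _ n ih =>
    match n with
    | 0 => simp [convQ]
    | 1 => exact hc 1 le_rfl
    | m + 2 =>
      have := hc (m + 2) (by omega)
      simp only [convQ]
      nlinarith [ih (m + 1) (by omega), ih m (by omega)]

theorem convQ_le_convQ_succ (n : ℕ) : convQ c n ≤ convQ c (n + 1) := by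
  match n with
  | 0 => simpa [convQ] using hc 1 le_rfl
  | m + 1 =>
    have := hc (m + 2) (by omega)
    simp only [convQ]
    nlinarith [convQ_pos_s16 hc (m + 1), convQ_pos_s16 hc m]

theorem two_le_convQ {n : ℕ} (hn : 2 ≤ n) : 2 ≤ convQ c n := by
  obtain ⟨m, rfl⟩ : ∃ m, n = m + 2 := ⟨n - 2, by omega⟩
  have := hc (m + 2) (by omega)
  simp only [convQ]
  nlinarith [convQ_pos_s16 hc (m + 1), convQ_pos_s16 hc m]

theorem convP_div_convQ_lt_convP_div_convQ_iff {N j : ℕ} :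
    (convP c N : ℝ) / convQ c N < convP c j / convQ c j ↔ 0 < crossDet c N j := by
  rw [div_lt_div_iff₀ (by exact_mod_cast convQ_pos_s16 hc N) (by exact_mod_cast convQ_pos_s16 hc j),
    crossDet, sub_pos]
  norm_cast

theorem three_mul_convQ_mul_le_convQ_add_three {k : ℕ} (hq : convQ c (k + 1) ≤ 2 * convQ c k)
    (h2 : c (k + 2) = 2) (h3 : c (k + 3) = 1) :
    3 * convQ c (k + 1) * (c (k + 4) + 1) ≤ convQ c (k + 4) := by
  have h4 := hc (k + 4) (by omega)
  have hqk := convQ_pos_s16 hc k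
  simp only [convQ, h2, h3]
  nlinarith

omit hc

theorem convP_div_convQ_lt_of_even {γ : ℝ} (hcf : IsCF γ c) {k : ℕ} (hk : Even k) :
    (convP c k : ℝ) / convQ c k < γ := by
  have hmono : StrictMono fun k => (convP c (2 * k) : ℝ) / convQ c (2 * k) := by
    refine strictMono_nat_of_lt_succ fun k => ?_
    rw [convP_div_convQ_lt_convP_div_convQ_iff hcf.1, show 2 * (k + 1) = 2 * k + 2 by ring,
      crossDet_add_two_self, Even.neg_one_pow (even_two_mul k), one_mul]
    exact hcf.1 _ (by omega)
  obtain ⟨m, rfl⟩ := hk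
  rw [← two_mul]
  exact hmono.lt_of_tendsto (hcf.2.comp (StrictMono.tendsto_atTop fun a b h => by omega)) m

theorem lt_convP_div_convQ_of_odd {γ : ℝ} (hcf : IsCF γ c) {k : ℕ} (hk : Odd k) :
    γ < (convP c k : ℝ) / convQ c k := by
  have hanti : StrictAnti fun k => (convP c (2 * k + 1) : ℝ) / convQ c (2 * k + 1) := by
    refine strictAnti_nat_of_succ_lt fun k => ?_
    rw [convP_div_convQ_lt_convP_div_convQ_iff hcf.1, crossDet_swap,
      show 2 * (k + 1) + 1 = 2 * k + 1 + 2 by ring, crossDet_add_two_self,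
      Odd.neg_one_pow (odd_two_mul_add_one k), neg_one_mul, neg_neg]
    exact hcf.1 _ (by omega)
  obtain ⟨m, rfl⟩ := hk
  exact hanti.lt_of_tendsto (hcf.2.comp (StrictMono.tendsto_atTop fun a b h => by omega)) m

theorem convQ_mul_sub_convP_pos {γ : ℝ} (hcf : IsCF γ c) {N : ℕ} (hN : Even N) :
    0 < (convQ c N : ℝ) * γ - convP c N := by
  have := convP_div_convQ_lt_of_even hcf hN
  rw [div_lt_iff₀ (by exact_mod_cast convQ_pos_s16 hcf.1 N)] at this
  linarith

theorem convQ_mul_sub_convP_lt_crossDet_div {γ : ℝ} (hcf : IsCF γ c) (N : ℕ) {j : ℕ}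
    (hj : Odd j) : (convQ c N : ℝ) * γ - convP c N < crossDet c N j / convQ c j := by
  have hq : (0 : ℝ) < convQ c j := by exact_mod_cast convQ_pos_s16 hcf.1 j
  have := lt_convP_div_convQ_of_odd hcf hj
  rw [lt_div_iff₀ hq] at this
  rw [lt_div_iff₀ hq, crossDet]
  push_cast
  have hqN : (0 : ℝ) < convQ c N := by exact_mod_cast convQ_pos_s16 hcf.1 N
  nlinarith

theorem convQ_mul_convQ_mul_sub_convP_lt_one_third {γ : ℝ} (hcf : IsCF γ c) {N : ℕ}
    (hN : Even N) (hN2 : 2 ≤ N) (h0 : c N = 1) (h1 : c (N + 1) = 2) (h2 : c (N + 2) = 1) :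
    (convQ c N : ℝ) * ((convQ c N : ℝ) * γ - convP c N) < 1 / 3 := by
  obtain ⟨k, rfl⟩ : ∃ k, N = k + 1 := ⟨N - 1, by omega⟩
  have hq : convQ c (k + 1) ≤ 2 * convQ c k := by
    obtain ⟨m, rfl⟩ : ∃ m, k = m + 1 := ⟨k - 1, by omega⟩
    have := convQ_le_convQ_succ hcf.1 m
    simp only [convQ, h0] at this ⊢
    omega
  have hdet : crossDet c (k + 1) (k + 4) = c (k + 4) + 1 := by
    rw [crossDet_add_three_self, h2, hN.neg_one_pow]
    ring
  have hQ := three_mul_convQ_mul_le_convQ_add_three hcf.1 hq h1 h2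
  have hq4 : (0 : ℝ) < convQ c (k + 4) := by exact_mod_cast convQ_pos_s16 hcf.1 _
  have hq1 : (0 : ℝ) < convQ c (k + 1) := by exact_mod_cast convQ_pos_s16 hcf.1 _
  have hodd : Odd (k + 4) := by
    obtain ⟨m, hm⟩ := hN
    exact ⟨m + 1, by omega⟩
  calc (convQ c (k + 1) : ℝ) * ((convQ c (k + 1) : ℝ) * γ - convP c (k + 1))
      < convQ c (k + 1) * (crossDet c (k + 1) (k + 4) / convQ c (k + 4)) :=
        mul_lt_mul_of_pos_left (convQ_mul_sub_convP_lt_crossDet_div hcf _ hodd) hq1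
    _ ≤ 1 / 3 := by
      rw [hdet, mul_div_assoc', div_le_iff₀ hq4]
      push_cast
      have : (3 * convQ c (k + 1) * (c (k + 4) + 1) : ℝ) ≤ convQ c (k + 4) := by
        exact_mod_cast hQ
      linarith

end ContinuedFraction

section Tangent

open Real Set

theorem Real.tan_eq_sin_two_mul_div_one_add_cos_two_mul (x : ℝ) :
    tan x = sin (2 * x) / (1 + cos (2 * x)) := by
  rw [tan_eq_sin_div_cos, sin_two_mul, cos_two_mul]
  rcases eq_or_ne (cos x) 0 with h | h
  · simp [h]
  · field_simp
    ring

theorem Real.tan_pi_div_twelve : tan (π / 12) = 2 - √3 := by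
  have h3 : √3 ^ 2 = 3 := sq_sqrt (by norm_num)
  rw [tan_eq_sin_two_mul_div_one_add_cos_two_mul, show 2 * (π / 12) = π / 6 by ring,
    sin_pi_div_six, cos_pi_div_six, div_eq_iff (by positivity)]
  linear_combination h3 / 2

theorem Real.convexOn_tan : ConvexOn ℝ (Ico 0 (π / 2)) tan := by
  have hcos : ∀ x ∈ Ico 0 (π / 2), 0 < cos x := fun x hx =>
    cos_pos_of_mem_Ioo ⟨by linarith [hx.1, pi_pos], hx.2⟩
  refine MonotoneOn.convexOn_of_deriv (convex_Ico _ _)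
    (continuousOn_tan.mono fun x hx => (hcos x hx).ne') ?_ ?_ <;> rw [interior_Ico]
  · exact fun x hx =>
      (differentiableAt_tan.2 (hcos x (Ioo_subset_Ico_self hx)).ne').differentiableWithinAt
  · intro x hx y hy hxy
    have hx' := hcos x (Ioo_subset_Ico_self hx)
    have hy' := hcos y (Ioo_subset_Ico_self hy)
    have : cos y ≤ cos x := cos_le_cos_of_nonneg_of_le_pi hx.1.le (by linarith [hy.2, pi_pos]) hxy
    rw [deriv_tan, deriv_tan]
    gcongr

theorem ConvexOn.le_div_mul_of_map_zero {f : ℝ → ℝ} {b x : ℝ} (hf : ConvexOn ℝ (Icc 0 b) f)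
    (hf0 : f 0 = 0) (hx : x ∈ Icc 0 b) : f x ≤ f b / b * x := by
  rcases hx.1.eq_or_lt with rfl | hx0
  · simp [hf0]
  have := hf.secant_mono (left_mem_Icc.2 (hx.1.trans hx.2)) hx (right_mem_Icc.2 (hx.1.trans hx.2))
    hx0.ne' (hx0.trans_le hx.2).ne' hx.2
  rwa [hf0, sub_zero, sub_zero, sub_zero, sub_zero, div_le_iff₀ hx0] at this

theorem Real.tan_le_of_le_pi_div_twelve {x : ℝ} (hx0 : 0 ≤ x) (hx : x ≤ π / 12) :
    tan x ≤ 12 * (2 - √3) / π * x := by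
  have hconv : ConvexOn ℝ (Icc 0 (π / 12)) tan :=
    convexOn_tan.subset (Icc_subset_Ico_right (by linarith [pi_pos])) (convex_Icc _ _)
  have := hconv.le_div_mul_of_map_zero tan_zero ⟨hx0, hx⟩
  rwa [tan_pi_div_twelve, div_div_eq_mul_div, mul_comm (2 - √3)] at this

theorem two_div_pi_mul_mul_tan_lt {q d : ℝ} (hq : 2 ≤ q) (hd : 0 ≤ d) (hqd : q * d < 1 / 3) :
    2 / π * q * tan (π / 2 * d) < 4 / π * (2 - √3) := by
  have hπ := pi_pos
  have h3 : √3 < 2 := by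
    rw [sqrt_lt' two_pos]; norm_num
  have hd6 : d ≤ 1 / 6 := by nlinarith
  have htan : tan (π / 2 * d) ≤ 6 * (2 - √3) * d := by
    have := tan_le_of_le_pi_div_twelve (x := π / 2 * d) (by positivity) (by nlinarith)
    convert this using 1
    field_simp
    ring
  calc 2 / π * q * tan (π / 2 * d) ≤ 2 / π * q * (6 * (2 - √3) * d) := by gcongr
    _ = 12 / π * (2 - √3) * (q * d) := by ring
    _ < 12 / π * (2 - √3) * (1 / 3) := by gcongr
    _ = 4 / π * (2 - √3) := by ring

end Tangent

open Real

theorem stmt_16_general (γ : ℝ) (c : ℕ → ℤ) (hcf : IsCF γ c)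
    (heven : ∀ n, 1 ≤ n → c (2 * n) = 1)
    (n : ℕ) (hn : 1 ≤ n) (hc : c (2 * n + 1) = 2) :
    (convQ c (2 * n) : ℝ) * ((convQ c (2 * n) : ℝ) * γ - (convP c (2 * n) : ℝ)) < 1 / 3 ∧
    (2 / π) * (convQ c (2 * n) : ℝ) *
        Real.tan (π / 2 * ((convQ c (2 * n) : ℝ) * γ - (convP c (2 * n) : ℝ))) <
      (4 / π) * (2 - Real.sqrt 3) := by
  have hN : Even (2 * n) := even_two_mul n
  have hbound := convQ_mul_convQ_mul_sub_convP_lt_one_third hcf hN (by omega) (heven n hn) hc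
    (heven (n + 1) (by omega))
  refine ⟨hbound, two_div_pi_mul_mul_tan_lt ?_ (convQ_mul_sub_convP_pos hcf hN).le hbound⟩
  exact_mod_cast two_le_convQ hcf.1 (by omega)

theorem stmt_16 (γ : ℝ) (hγ : Irrational γ) (c : ℕ → ℤ) (hcf : IsCF γ c)
    (hc0 : c 0 = 0) (hc1 : c 1 = 1)
    (heven : ∀ n, 1 ≤ n → c (2 * n) = 1)
    (hodd : ∀ n, 1 ≤ n → c (2 * n + 1) = 1 ∨ c (2 * n + 1) = 2)
    (n : ℕ) (hn : 1 ≤ n) (hc : c (2 * n + 1) = 2) :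
    (convQ c (2 * n) : ℝ) * ((convQ c (2 * n) : ℝ) * γ - (convP c (2 * n) : ℝ)) < 1 / 3 ∧
    (2 / π) * (convQ c (2 * n) : ℝ) *
        Real.tan (π / 2 * ((convQ c (2 * n) : ℝ) * γ - (convP c (2 * n) : ℝ))) <
      (4 / π) * (2 - Real.sqrt 3) :=
  stmt_16_general γ c hcf heven n hn hc
end
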